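/- arXiv:1402.4225 — 3 statements merged into one kernel-verified Lean document; each statement's English description precedes it below -/
import Mathlib

section
/- Let X₁,…,X_k and Y₁,…,Y_k be as in the distributed-observation converse setup (each Y_ℓ obtained from X_ℓ through an independent erasure channel with non-erasure probability p, erasures independent across ℓ and of all X's). Suppose there is a decoder g with Pr(g(Y₁,…,Y_k) ≠ (X₁,…,X_k)) ≤ ε. Then p · ∑_{ℓ=1}^k H(X_ℓ) ≥ H(X₁,…,X_k) − h(ε) − ε·log|𝒳₁×⋯×𝒳_k|, where h is the binary entropy function. -/
/-!
`(X, Y)` is an injective function of `(X, B)`, and `X` is independent of the i.i.d. vector `B`,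
so `H(X, Y) = H(X) + ∑ H(B_ℓ)`. Each `Y_ℓ` is an erasure of `X_ℓ` by an independent `B_ℓ`, so
`H(Y_ℓ) = H(B_ℓ) + p H(X_ℓ)`, and subadditivity gives `H(Y) ≤ ∑ H(Y_ℓ)`; together
`H(X | Y) ≥ H(X) - p ∑ H(X_ℓ)`. Fano's inequality bounds `H(X | Y)` by `h(Pₑ) + Pₑ log |𝒳|`;
since `t ↦ h(t) + t log |𝒳|` is concave and `H(X | Y) ≤ log |𝒳|`, the error probability `Pₑ`
may be replaced by any `ε ∈ [Pₑ, 1]`. Every entropy inequality used is an instance of Gibbs'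
inequality.
-/

open Real Finset

open scoped Classical in
/-- Probability that the random variable `X` takes the value `a`, under the pmf `f`
on the finite sample space `Ω`. -/
noncomputable def pr {Ω α : Type*} [Fintype Ω] (f : Ω → ℝ) (X : Ω → α) (a : α) : ℝ :=
  ∑ ω, if X ω = a then f ω else 0

/-- Shannon entropy (natural log) of a random variable `X` on a finite space. -/
noncomputable def ent {Ω α : Type*} [Fintype Ω] [Fintype α] (f : Ω → ℝ) (X : Ω → α) : ℝ :=
  ∑ a, Real.negMulLog (pr f X a)

/-- Mutual information `I(X;Y) = H(X) + H(Y) - H(X,Y)`. -/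
noncomputable def mi {Ω α β : Type*} [Fintype Ω] [Fintype α] [Fintype β]
    (f : Ω → ℝ) (X : Ω → α) (Y : Ω → β) : ℝ :=
  ent f X + ent f Y - ent f (fun ω => (X ω, Y ω))

/-- Conditional entropy `H(X|Y) = H(X,Y) - H(Y)`. -/
noncomputable def condEnt {Ω α β : Type*} [Fintype Ω] [Fintype α] [Fintype β]
    (f : Ω → ℝ) (X : Ω → α) (Y : Ω → β) : ℝ :=
  ent f (fun ω => (X ω, Y ω)) - ent f Y

/-- Conditional mutual information
`I(X;Y|Z) = H(X,Z) + H(Y,Z) - H(X,Y,Z) - H(Z)`. -/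
noncomputable def cmi {Ω α β γ : Type*} [Fintype Ω] [Fintype α] [Fintype β] [Fintype γ]
    (f : Ω → ℝ) (X : Ω → α) (Y : Ω → β) (Z : Ω → γ) : ℝ :=
  ent f (fun ω => (X ω, Z ω)) + ent f (fun ω => (Y ω, Z ω))
    - ent f (fun ω => (X ω, Y ω, Z ω)) - ent f Z

/-- Binary entropy function `h(x) = -x log x - (1-x) log (1-x)`. -/
noncomputable def binEnt (x : ℝ) : ℝ := Real.negMulLog x + Real.negMulLog (1 - x)

open scoped Classical

section Distribution

variable {Ω α β γ δ : Type*} [Fintype Ω] {f : Ω → ℝ}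

lemma pr_nonneg (hf0 : ∀ ω, 0 ≤ f ω) (Z : Ω → α) (a : α) : 0 ≤ pr f Z a :=
  sum_nonneg fun ω _ => by split_ifs <;> simp [hf0 ω]

lemma sum_pr [Fintype α] (hf1 : ∑ ω, f ω = 1) (Z : Ω → α) : ∑ a, pr f Z a = 1 := by
  simp only [pr]
  rw [sum_comm]
  simpa using hf1

lemma pr_congr {Y : Ω → β} {Z : Ω → α} {b : β} {a : α} (h : ∀ ω, Y ω = b ↔ Z ω = a) :
    pr f Y b = pr f Z a := by
  simp only [pr, h]

lemma sum_pr_mul [Fintype α] (Z : Ω → α) (c : α → ℝ) :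
    ∑ a, pr f Z a * c a = ∑ ω, f ω * c (Z ω) := by
  simp only [pr, sum_mul, ite_mul, zero_mul]
  rw [sum_comm]
  simp

lemma pr_comp [Fintype α] (φ : α → β) (Z : Ω → α) (b : β) :
    pr f (fun ω => φ (Z ω)) b = ∑ a, if φ a = b then pr f Z a else 0 := by
  have h := sum_pr_mul (f := f) Z (fun a => if φ a = b then 1 else 0)
  simp only [mul_ite, mul_one, mul_zero] at h
  rw [h, pr]

lemma pr_le_pr_comp (hf0 : ∀ ω, 0 ≤ f ω) (φ : α → β) (Z : Ω → α) (a : α) :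
    pr f Z a ≤ pr f (fun ω => φ (Z ω)) (φ a) :=
  sum_le_sum fun ω _ => by
    by_cases h : Z ω = a
    · simp [h]
    · simp only [h, if_false]
      split_ifs <;> simp [hf0 ω]

lemma sum_pr_prod_left [Fintype α] [Fintype β] (Z : Ω → α) (W : Ω → β) (b : β) :
    ∑ a, pr f (fun ω => (Z ω, W ω)) (a, b) = pr f W b := by
  rw [pr_comp Prod.snd (fun ω => (Z ω, W ω)), Fintype.sum_prod_type_right, sum_comm]
  simp

def IndepPr (f : Ω → ℝ) (Z : Ω → α) (W : Ω → β) : Prop :=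
  ∀ a b, pr f (fun ω => (Z ω, W ω)) (a, b) = pr f Z a * pr f W b

lemma IndepPr.comp [Fintype α] [Fintype β] {Z : Ω → α} {W : Ω → β} (h : IndepPr f Z W)
    (φ : α → γ) (ψ : β → δ) : IndepPr f (fun ω => φ (Z ω)) (fun ω => ψ (W ω)) := by
  intro c d
  rw [pr_comp (fun z : α × β => (φ z.1, ψ z.2)) (fun ω => (Z ω, W ω)), pr_comp φ Z, pr_comp ψ W,
    Fintype.sum_prod_type, sum_mul_sum]
  refine sum_congr rfl fun a _ => sum_congr rfl fun b _ => ?_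
  rw [h a b]
  simp only [Prod.mk.injEq]
  split_ifs <;> simp_all

noncomputable def errProb (f : Ω → ℝ) (Z : Ω → α) (W : Ω → β) (g : β → α) : ℝ :=
  ∑ ω, if g (W ω) ≠ Z ω then f ω else 0

lemma errProb_nonneg (hf0 : ∀ ω, 0 ≤ f ω) (Z : Ω → α) (W : Ω → β) (g : β → α) :
    0 ≤ errProb f Z W g :=
  sum_nonneg fun ω _ => by split_ifs <;> simp [hf0 ω]

lemma errProb_le_one (hf0 : ∀ ω, 0 ≤ f ω) (hf1 : ∑ ω, f ω = 1) (Z : Ω → α) (W : Ω → β)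
    (g : β → α) : errProb f Z W g ≤ 1 :=
  hf1 ▸ sum_le_sum fun ω _ => by split_ifs <;> simp [hf0 ω]

end Distribution

section Entropy

variable {Ω α β : Type*} [Fintype Ω] [Fintype α] [Fintype β] {f : Ω → ℝ}

lemma ent_eq_sum_mul_neg_log (Z : Ω → α) : ent f Z = ∑ a, pr f Z a * -log (pr f Z a) := by
  simp only [ent, negMulLog, neg_mul, mul_neg]

lemma sum_pr_mul_neg_log_pr_comp (φ : α → β) (Z : Ω → α) :
    ∑ a, pr f Z a * -log (pr f (fun ω => φ (Z ω)) (φ a)) = ent f (fun ω => φ (Z ω)) := by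
  rw [sum_pr_mul Z (fun a => -log (pr f (fun ω => φ (Z ω)) (φ a))), ent_eq_sum_mul_neg_log,
    sum_pr_mul (fun ω => φ (Z ω)) (fun b => -log (pr f (fun ω => φ (Z ω)) b))]

lemma ent_comp_of_injective {φ : α → β} (hφ : φ.Injective) (Z : Ω → α) :
    ent f (fun ω => φ (Z ω)) = ent f Z := by
  refine (Fintype.sum_of_injective φ hφ _ _ (fun b hb => ?_) fun a => ?_).symm
  · have : pr f (fun ω => φ (Z ω)) b = 0 :=
      sum_eq_zero fun ω _ => if_neg fun h => hb ⟨Z ω, h⟩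
    simp [this]
  · rw [pr_congr fun ω => hφ.eq_iff]

lemma negMulLog_le_mul_neg_log_add_sub {x y : ℝ} (hx : 0 ≤ x) (hy : 0 ≤ y)
    (hxy : 0 < x → 0 < y) : negMulLog x ≤ x * -log y + (y - x) := by
  rcases hx.eq_or_lt with rfl | hx
  · simpa using hy
  · have hy := hxy hx
    have hlog := log_le_sub_one_of_pos (div_pos hy hx)
    rw [log_div hy.ne' hx.ne'] at hlog
    calc negMulLog x = x * -log y + x * (log y - log x) := by rw [negMulLog]; ring
      _ ≤ x * -log y + x * (y / x - 1) := by gcongr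
      _ = x * -log y + (y - x) := by field_simp

/-- Gibbs' inequality. -/
lemma ent_le_sum_mul_neg_log (hf0 : ∀ ω, 0 ≤ f ω) (hf1 : ∑ ω, f ω = 1) (Z : Ω → α)
    (q : α → ℝ) (hq0 : ∀ a, 0 ≤ q a) (hq1 : ∑ a, q a ≤ 1)
    (hsupp : ∀ a, 0 < pr f Z a → 0 < q a) :
    ent f Z ≤ ∑ a, pr f Z a * -log (q a) := by
  have h := sum_le_sum fun a (_ : a ∈ univ) =>
    negMulLog_le_mul_neg_log_add_sub (pr_nonneg hf0 Z a) (hq0 a) (hsupp a)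
  rw [sum_add_distrib, sum_sub_distrib, sum_pr hf1] at h
  exact h.trans (by linarith)

lemma IndepPr.ent_prod {Z : Ω → α} {W : Ω → β} (h : IndepPr f Z W) :
    ent f (fun ω => (Z ω, W ω)) = ent f Z + ent f W := by
  have hZ : ∑ z : α × β, pr f (fun ω => (Z ω, W ω)) z * -log (pr f Z z.1) = ent f Z :=
    sum_pr_mul_neg_log_pr_comp Prod.fst (fun ω => (Z ω, W ω))
  have hW : ∑ z : α × β, pr f (fun ω => (Z ω, W ω)) z * -log (pr f W z.2) = ent f W :=
    sum_pr_mul_neg_log_pr_comp Prod.snd (fun ω => (Z ω, W ω))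
  rw [ent_eq_sum_mul_neg_log, ← hZ, ← hW, ← sum_add_distrib]
  refine sum_congr rfl fun z _ => ?_
  rcases eq_or_ne (pr f (fun ω => (Z ω, W ω)) z) 0 with h0 | h0
  · simp [h0]
  · rw [h z.1 z.2] at h0 ⊢
    rw [log_mul (left_ne_zero_of_mul h0) (right_ne_zero_of_mul h0)]
    ring

section Pi

variable {ι : Type*} [Fintype ι] [DecidableEq ι] {κ : ι → Type*} [∀ i, Fintype (κ i)]

lemma sum_pr_mul_neg_log_prod_pr_eval (hf0 : ∀ ω, 0 ≤ f ω) (Z : Ω → ∀ i, κ i) :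
    ∑ z, pr f Z z * -log (∏ i, pr f (fun ω => Z ω i) (z i)) = ∑ i, ent f (fun ω => Z ω i) := by
  have hsplit : ∀ z, pr f Z z * -log (∏ i, pr f (fun ω => Z ω i) (z i))
      = ∑ i, pr f Z z * -log (pr f (fun ω => Z ω i) (z i)) := fun z => by
    rcases (pr_nonneg hf0 Z z).eq_or_lt with h | h
    · simp [← h]
    · rw [log_prod fun i _ => (h.trans_le (pr_le_pr_comp hf0 (fun z => z i) Z z)).ne',
        ← mul_sum, sum_neg_distrib]
  simp_rw [hsplit]
  rw [sum_comm]
  exact sum_congr rfl fun i _ => sum_pr_mul_neg_log_pr_comp (fun z : ∀ i, κ i => z i) Z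

lemma ent_le_sum_ent_eval (hf0 : ∀ ω, 0 ≤ f ω) (hf1 : ∑ ω, f ω = 1) (Z : Ω → ∀ i, κ i) :
    ent f Z ≤ ∑ i, ent f (fun ω => Z ω i) := by
  rw [← sum_pr_mul_neg_log_prod_pr_eval hf0 Z]
  refine ent_le_sum_mul_neg_log hf0 hf1 Z _ (fun z => prod_nonneg fun i _ => pr_nonneg hf0 _ _)
    ?_ fun z hz => prod_pos fun i _ => hz.trans_le (pr_le_pr_comp hf0 (fun z => z i) Z z)
  rw [← Fintype.prod_sum]
  simp [sum_pr hf1]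

lemma ent_eq_sum_ent_eval (hf0 : ∀ ω, 0 ≤ f ω) (Z : Ω → ∀ i, κ i)
    (h : ∀ z, pr f Z z = ∏ i, pr f (fun ω => Z ω i) (z i)) :
    ent f Z = ∑ i, ent f (fun ω => Z ω i) := by
  rw [← sum_pr_mul_neg_log_prod_pr_eval hf0 Z, ent_eq_sum_mul_neg_log]
  exact sum_congr rfl fun z _ => by rw [← h z]

end Pi

end Entropy

lemma concaveOn_binEnt_add_mul (L : ℝ) : ConcaveOn ℝ (Set.Icc 0 1) fun t => binEnt t + t * L := by
  have hbin : binEnt = binEntropy :=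
    funext fun t => (binEntropy_eq_negMulLog_add_negMulLog_one_sub t).symm
  rw [hbin]
  exact strictConcave_binEntropy.concaveOn.add ((LinearMap.mulRight ℝ L).concaveOn (convex_Icc 0 1))

-- `t ↦ h(t) + t L` is concave and equals `L` at `t = 1`.
lemma le_binEnt_add_mul_of_le {H L s t : ℝ} (hs : 0 ≤ s) (hst : s ≤ t) (ht : t ≤ 1)
    (hHs : H ≤ binEnt s + s * L) (hHL : H ≤ L) : H ≤ binEnt t + t * L := by
  have hseg : t ∈ segment ℝ s 1 := by rw [segment_eq_Icc (hst.trans ht)]; exact ⟨hst, ht⟩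
  have h := (concaveOn_binEnt_add_mul L).ge_on_segment ⟨hs, hst.trans ht⟩ ⟨zero_le_one, le_rfl⟩ hseg
  have hL : binEnt 1 + 1 * L = L := by simp [binEnt]
  rw [hL] at h
  exact (le_min hHs hHL).trans h

section Fano

variable {Ω α β : Type*} [Fintype Ω] [Fintype α] [Fintype β] {f : Ω → ℝ}

lemma condEnt_le_sum_mul_neg_log (hf0 : ∀ ω, 0 ≤ f ω) (hf1 : ∑ ω, f ω = 1) (Z : Ω → α)
    (W : Ω → β) (q : α → β → ℝ) (hq0 : ∀ a b, 0 ≤ q a b) (hq1 : ∀ b, ∑ a, q a b ≤ 1)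
    (hsupp : ∀ a b, 0 < pr f (fun ω => (Z ω, W ω)) (a, b) → 0 < q a b) :
    condEnt f Z W ≤ ∑ z, pr f (fun ω => (Z ω, W ω)) z * -log (q z.1 z.2) := by
  set P := pr f (fun ω => (Z ω, W ω))
  have hPW : ∀ z, P z ≤ pr f W z.2 := pr_le_pr_comp hf0 Prod.snd _
  have hmass : ∑ z : α × β, pr f W z.2 * q z.1 z.2 ≤ 1 := by
    rw [Fintype.sum_prod_type_right]
    calc ∑ b, ∑ a, pr f W b * q a b = ∑ b, pr f W b * ∑ a, q a b := by simp only [mul_sum]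
      _ ≤ ∑ b, pr f W b * 1 := by gcongr with b; exacts [pr_nonneg hf0 W b, hq1 b]
      _ = 1 := by simp [sum_pr hf1]
  have hgibbs := ent_le_sum_mul_neg_log hf0 hf1 (fun ω => (Z ω, W ω))
    (fun z => pr f W z.2 * q z.1 z.2) (fun z => mul_nonneg (pr_nonneg hf0 W _) (hq0 _ _)) hmass
    (fun z hz => mul_pos (hz.trans_le (hPW z)) (hsupp _ _ hz))
  have hsplit : ∀ z, P z * -log (pr f W z.2 * q z.1 z.2)
      = P z * -log (pr f W z.2) + P z * -log (q z.1 z.2) := fun z => by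
    rcases (pr_nonneg hf0 (fun ω => (Z ω, W ω)) z).eq_or_lt with h | h
    · simp [P, ← h]
    · rw [log_mul (h.trans_le (hPW z)).ne' (hsupp _ _ h).ne']
      ring
  have hW : ∑ z, P z * -log (pr f W z.2) = ent f W :=
    sum_pr_mul_neg_log_pr_comp Prod.snd (fun ω => (Z ω, W ω))
  rw [sum_congr rfl fun z _ => hsplit z, sum_add_distrib, hW] at hgibbs
  rw [condEnt]
  linarith

lemma condEnt_le_log_card (hf0 : ∀ ω, 0 ≤ f ω) (hf1 : ∑ ω, f ω = 1) (Z : Ω → α) (W : Ω → β) :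
    condEnt f Z W ≤ log (Fintype.card α) := by
  obtain ⟨ω₀, -⟩ := nonempty_of_sum_ne_zero (hf1 ▸ one_ne_zero : ∑ ω, f ω ≠ 0)
  have hM : (0 : ℝ) < Fintype.card α := by exact_mod_cast Fintype.card_pos_iff.mpr ⟨Z ω₀⟩
  refine (condEnt_le_sum_mul_neg_log hf0 hf1 Z W (fun _ _ => (Fintype.card α : ℝ)⁻¹)
    (fun _ _ => by positivity) (fun _ => by simp [hM.ne']) fun _ _ _ => by positivity).trans ?_
  rw [← sum_mul, sum_pr hf1, log_inv, neg_neg, one_mul]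

lemma sum_pr_mul_ite_eq (hf1 : ∑ ω, f ω = 1) (Z : Ω → α) (W : Ω → β) (g : β → α) (c e : ℝ) :
    ∑ z, pr f (fun ω => (Z ω, W ω)) z * (if z.1 = g z.2 then c else e)
      = (1 - errProb f Z W g) * c + errProb f Z W g * e := by
  rw [sum_pr_mul, ← hf1, errProb, ← sum_sub_distrib, sum_mul, sum_mul, ← sum_add_distrib]
  refine sum_congr rfl fun ω _ => ?_
  by_cases h : Z ω = g (W ω) <;> simp [h, eq_comm]

lemma pr_prod_le_ite_errProb (hf0 : ∀ ω, 0 ≤ f ω) (hf1 : ∑ ω, f ω = 1) (Z : Ω → α)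
    (W : Ω → β) (g : β → α) (a : α) (b : β) :
    pr f (fun ω => (Z ω, W ω)) (a, b)
      ≤ if a = g b then 1 - errProb f Z W g else errProb f Z W g := by
  set P := pr f (fun ω => (Z ω, W ω))
  have hle : ∀ c e : ℝ, 0 ≤ c → 0 ≤ e → P (a, b) * (if a = g b then c else e)
      ≤ (1 - errProb f Z W g) * c + errProb f Z W g * e := fun c e hc he => by
    rw [← sum_pr_mul_ite_eq hf1]
    exact single_le_sum (f := fun z => P z * (if z.1 = g z.2 then c else e))
      (fun z _ => mul_nonneg (pr_nonneg hf0 _ z) (by split_ifs <;> assumption)) (mem_univ (a, b))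
  split_ifs with h
  · simpa [h] using hle 1 0 zero_le_one le_rfl
  · simpa [h] using hle 0 1 le_rfl zero_le_one

/-- Fano's inequality. -/
lemma condEnt_le_binEnt_errProb_add (hf0 : ∀ ω, 0 ≤ f ω) (hf1 : ∑ ω, f ω = 1) (Z : Ω → α)
    (W : Ω → β) (g : β → α) :
    condEnt f Z W ≤ binEnt (errProb f Z W g) + errProb f Z W g * log (Fintype.card α) := by
  set e := errProb f Z W g
  set M : ℝ := (Fintype.card α : ℝ)
  obtain ⟨ω₀, -⟩ := nonempty_of_sum_ne_zero (hf1 ▸ one_ne_zero : ∑ ω, f ω ≠ 0)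
  have hM : 0 < M := Nat.cast_pos.mpr (Fintype.card_pos_iff.mpr ⟨Z ω₀⟩)
  have he0 : 0 ≤ e := errProb_nonneg hf0 Z W g
  have he1 : e ≤ 1 := errProb_le_one hf0 hf1 Z W g
  have hq1 : ∀ b, ∑ a, (if a = g b then 1 - e else e / M) ≤ 1 := fun b => by
    have hsplit : ∀ a, (if a = g b then 1 - e else e / M)
        = e / M + if a = g b then 1 - e - e / M else 0 := fun a => by split_ifs <;> ring
    rw [sum_congr rfl fun a _ => hsplit a, sum_add_distrib, sum_ite_eq', sum_const, card_univ,
      nsmul_eq_mul, if_pos (mem_univ _), mul_div_cancel₀ _ hM.ne']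
    linarith [div_nonneg he0 hM.le]
  -- Cross entropy against the law that guesses `g b` with probability `1 - e` and spreads `e`
  -- uniformly over `α`.
  refine (condEnt_le_sum_mul_neg_log hf0 hf1 Z W (fun a b => if a = g b then 1 - e else e / M)
    (fun a b => by split_ifs <;> [linarith; positivity]) hq1 fun a b hP => ?_).trans_eq ?_
  · have hPe := hP.trans_le (pr_prod_le_ite_errProb hf0 hf1 Z W g a b)
    split_ifs at hPe ⊢
    exacts [hPe, div_pos hPe hM]
  · have hcross : ∀ z : α × β, pr f (fun ω => (Z ω, W ω)) z
          * -log (if z.1 = g z.2 then 1 - e else e / M)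
        = pr f (fun ω => (Z ω, W ω)) z
          * (if z.1 = g z.2 then -log (1 - e) else -log (e / M)) := fun z => by
      split_ifs <;> rfl
    rw [sum_congr rfl fun z _ => hcross z, sum_pr_mul_ite_eq hf1]
    rcases he0.eq_or_lt with h | h
    · simp [← h, binEnt]
    · rw [log_div h.ne' hM.ne', binEnt, negMulLog, negMulLog]
      ring

lemma condEnt_le_binEnt_add_of_errProb_le (hf0 : ∀ ω, 0 ≤ f ω) (hf1 : ∑ ω, f ω = 1)
    (Z : Ω → α) (W : Ω → β) (g : β → α) {ε : ℝ} (hε : errProb f Z W g ≤ ε) (hε1 : ε ≤ 1) :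
    condEnt f Z W ≤ binEnt ε + ε * log (Fintype.card α) :=
  le_binEnt_add_mul_of_le (errProb_nonneg hf0 Z W g) hε hε1
    (condEnt_le_binEnt_errProb_add hf0 hf1 Z W g) (condEnt_le_log_card hf0 hf1 Z W)

end Fano

section Erasure

variable {Ω α : Type*} [Fintype Ω] [Fintype α] {f : Ω → ℝ}

lemma ent_erasure (hf1 : ∑ ω, f ω = 1) {Z : Ω → α} {E : Ω → Bool} {Y : Ω → Option α}
    (hY : ∀ ω, Y ω = if E ω then some (Z ω) else none) (hZE : IndepPr f Z E) :
    ent f Y = ent f E + pr f E true * ent f Z := by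
  have hsome : ∀ a, pr f Y (some a) = pr f Z a * pr f E true := fun a => by
    rw [← hZE a true]
    exact pr_congr fun ω => by rw [hY]; cases E ω <;> simp
  have hnone : pr f Y none = pr f E false := pr_congr fun ω => by rw [hY]; cases E ω <;> simp
  simp only [ent, Fintype.sum_option, Fintype.sum_bool, hsome, hnone, negMulLog_mul,
    sum_add_distrib, ← sum_mul, ← mul_sum, sum_pr hf1]
  ring

lemma ent_prod_erasure {ι : Type*} [Fintype ι] [DecidableEq ι] {κ : ι → Type*}
    [∀ i, Fintype (κ i)] {Z : Ω → ∀ i, κ i} {E : Ω → ι → Bool} {Y : Ω → ∀ i, Option (κ i)}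
    (hY : ∀ ω i, Y ω i = if E ω i then some (Z ω i) else none) :
    ent f (fun ω => (Z ω, Y ω)) = ent f (fun ω => (Z ω, E ω)) := by
  set erase : ((∀ i, κ i) × (ι → Bool)) → (∀ i, κ i) × (∀ i, Option (κ i)) :=
    fun z => (z.1, fun i => if z.2 i then some (z.1 i) else none)
  have hinj : erase.Injective := by
    rintro ⟨z, w⟩ ⟨z', w'⟩ h
    simp only [erase, Prod.mk.injEq] at h
    obtain ⟨rfl, hw⟩ := h
    refine Prod.ext rfl (funext fun i => ?_)
    have := congrFun hw i
    cases hwi : w i <;> cases hwi' : w' i <;> simp [hwi, hwi'] at this ⊢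
  have hZY : (fun ω => (Z ω, Y ω)) = fun ω => erase (Z ω, E ω) := funext fun ω => by
    simp only [erase, Prod.mk.injEq, true_and]
    exact funext (hY ω)
  rw [hZY, ent_comp_of_injective hinj]

end Erasure

open scoped Classical in
/-- Converse bound: with independent erasure channels (non-erasure probability `p`)
on each row and a decoder with error probability at most `ε`,
`p ⬝ ∑ℓ H(Xℓ) ≥ H(X₁,…,X_k) - h(ε) - ε log|𝒳₁ × ⋯ × 𝒳_k|`. -/
theorem converse_fano_bound {Ω : Type*} [Fintype Ω] {k : ℕ} {α : Fin k → Type*}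
    [∀ ℓ, Fintype (α ℓ)]
    (f : Ω → ℝ) (hf0 : ∀ ω, 0 ≤ f ω) (hf1 : ∑ ω, f ω = 1)
    (p ε : ℝ) (hε1 : ε ≤ 1)
    (X : ∀ ℓ, Ω → α ℓ) (B : Fin k → Ω → Bool)
    (hp : ∀ ℓ, pr f (B ℓ) true = p)
    (hind : ∀ (a : ∀ ℓ, α ℓ) (b : Fin k → Bool),
      pr f (fun ω => (fun ℓ => X ℓ ω, fun ℓ => B ℓ ω)) (a, b)
        = pr f (fun ω ℓ => X ℓ ω) a * ∏ ℓ, (if b ℓ then p else 1 - p))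
    (Y : ∀ ℓ, Ω → Option (α ℓ)) (hY : ∀ ℓ ω, Y ℓ ω = if B ℓ ω then some (X ℓ ω) else none)
    (g : (∀ ℓ, Option (α ℓ)) → ∀ ℓ, α ℓ)
    (herr : (∑ ω, if g (fun ℓ => Y ℓ ω) ≠ (fun ℓ => X ℓ ω) then f ω else 0) ≤ ε) :
    p * ∑ ℓ, ent f (X ℓ) ≥
      ent f (fun ω ℓ => X ℓ ω) - binEnt ε
        - ε * Real.log (Fintype.card (∀ ℓ, α ℓ)) := by
  have hBvec : ∀ b, pr f (fun ω ℓ => B ℓ ω) b = ∏ ℓ, (if b ℓ then p else 1 - p) := fun b => by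
    rw [← sum_pr_prod_left (fun ω ℓ => X ℓ ω)]
    simp only [hind, ← sum_mul, sum_pr hf1, one_mul]
  have hBℓ : ∀ ℓ b, pr f (B ℓ) b = if b then p else 1 - p := fun ℓ b => by
    have h := sum_pr hf1 (B ℓ)
    rw [Fintype.sum_bool, hp] at h
    cases b
    · simp only [Bool.false_eq_true, if_false]
      linarith
    · simpa using hp ℓ
  have hXB : IndepPr f (fun ω ℓ => X ℓ ω) (fun ω ℓ => B ℓ ω) := fun a b => by
    rw [hind, hBvec]
  have hYℓ : ∀ ℓ, ent f (Y ℓ) = ent f (B ℓ) + p * ent f (X ℓ) := fun ℓ => by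
    rw [ent_erasure hf1 (hY ℓ) (hXB.comp (fun a => a ℓ) (fun b => b ℓ)), hp]
  have hlower : ent f (fun ω ℓ => X ℓ ω) - p * ∑ ℓ, ent f (X ℓ)
      ≤ condEnt f (fun ω ℓ => X ℓ ω) (fun ω ℓ => Y ℓ ω) := by
    have hsub := ent_le_sum_ent_eval hf0 hf1 (fun ω ℓ => Y ℓ ω)
    have hB : ent f (fun ω ℓ => B ℓ ω) = ∑ ℓ, ent f (B ℓ) :=
      ent_eq_sum_ent_eval hf0 _ fun b => by simp only [hBvec, hBℓ]
    rw [condEnt, ent_prod_erasure fun ω ℓ => hY ℓ ω, hXB.ent_prod, hB]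
    simp only [hYℓ, sum_add_distrib, ← mul_sum] at hsub
    linarith
  -- `herr` decides the error event through `DecidableEq` on `∀ ℓ, α ℓ`, hence `convert`.
  have hupper := condEnt_le_binEnt_add_of_errProb_le hf0 hf1 (fun ω ℓ => X ℓ ω)
    (fun ω ℓ => Y ℓ ω) g (by unfold errProb; convert herr) hε1
  linarith
end

section
/- Let {(X_{1i},…,X_{ki})}_{i≥1} be a stationary process of discrete random vectors on finite alphabets, and let Y_{ℓi} be the coordinatewise erasure of X_{ℓi} (non-erasure probability p, i.i.d. erasures independent of the process). Then for each ℓ, the limit a_ℓ = lim_{n→∞} (1/n) ∑_{i=1}^n I(Y_{ℓ,(i+1)}^n; X_{ℓi} | X_ℓ^{i−1}) exists, is nonnegative, and satisfies a_ℓ ≤ H̄(X_ℓ), where H̄(X_ℓ) = lim_n H(X_ℓ^n)/n is the entropy rate. -/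
open MeasureTheory Real Filter

/-- Probability that `X` takes the value `a` under the probability measure `μ`. -/
noncomputable def prm {Ω : Type*} [MeasurableSpace Ω] (μ : Measure Ω) {α : Type*}
    (X : Ω → α) (a : α) : ℝ :=
  (μ (X ⁻¹' {a})).toReal

/-- Shannon entropy (natural log) of a finite-alphabet random variable. -/
noncomputable def entm {Ω : Type*} [MeasurableSpace Ω] (μ : Measure Ω) {α : Type*}
    [Fintype α] (X : Ω → α) : ℝ :=
  ∑ a, Real.negMulLog (prm μ X a)

/-- Mutual information `I(X;Y) = H(X) + H(Y) - H(X,Y)`. -/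
noncomputable def mim {Ω : Type*} [MeasurableSpace Ω] (μ : Measure Ω) {α β : Type*}
    [Fintype α] [Fintype β] (X : Ω → α) (Y : Ω → β) : ℝ :=
  entm μ X + entm μ Y - entm μ (fun ω => (X ω, Y ω))

/-- Conditional mutual information
`I(X;Y|Z) = H(X,Z) + H(Y,Z) - H(X,Y,Z) - H(Z)`. -/
noncomputable def cmim {Ω : Type*} [MeasurableSpace Ω] (μ : Measure Ω) {α β γ : Type*}
    [Fintype α] [Fintype β] [Fintype γ] (X : Ω → α) (Y : Ω → β) (Z : Ω → γ) : ℝ :=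
  entm μ (fun ω => (X ω, Z ω)) + entm μ (fun ω => (Y ω, Z ω))
    - entm μ (fun ω => (X ω, Y ω, Z ω)) - entm μ Z

/-!
With `Hₙ = H(Xⁿ)` and `Tₙ = ∑_{i<n} H(Xᵢ | Y_{i+1}ⁿ, X^{i-1})`, the chain rule turns the `n`-th
correction sum into `Hₙ - Tₙ`. Both sequences are subadditive. For `Hₙ` this is subadditivity of
entropy plus stationarity. For `Tₙ`, split `[0, n + m)` at `n`: a term with `i < n` only grows
when the erasures beyond `n` are forgotten, and a term with `i ≥ n` only grows when the symbols
before `n` are forgotten, after which the joint stationarity of the process and its i.i.d. erasure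
mask turns it into the corresponding term of `Tₘ`. Fekete's lemma gives the limits `h̄` of `Hₙ / n`
and `t̄` of `Tₙ / n`, so `a = h̄ - t̄`, and `0 ≤ Tₙ ≤ Hₙ` gives `0 ≤ a ≤ h̄`.
-/

open Finset Function

lemma sum_mul_log_le_sum_mul_log {ι : Type*} [Fintype ι] {q r : ι → ℝ} (hq : ∀ z, 0 ≤ q z)
    (hr : ∀ z, 0 ≤ r z) (hqr : ∀ z, 0 < q z → 0 < r z) (hsum : ∑ z, r z ≤ ∑ z, q z) :
    ∑ z, q z * log (r z) ≤ ∑ z, q z * log (q z) := by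
  have key : ∀ z, q z * log (r z) - q z * log (q z) ≤ r z - q z := by
    intro z
    rcases (hq z).eq_or_lt with h | h
    · simp [← h, hr z]
    · have hlog := log_le_sub_one_of_pos (div_pos (hqr z h) h)
      rw [log_div (hqr z h).ne' h.ne'] at hlog
      calc q z * log (r z) - q z * log (q z) = q z * (log (r z) - log (q z)) := by ring
        _ ≤ q z * (r z / q z - 1) := mul_le_mul_of_nonneg_left hlog h.le
        _ = r z - q z := by field_simp
  have hkey := sum_le_sum fun z (_ : z ∈ univ) => key z
  simp only [sum_sub_distrib] at hkey
  linarith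

lemma sum_prod_filter_natAdd_eq {β : Type*} [Fintype β] [DecidableEq β] {w : β → ℝ}
    (hw : ∑ c, w c = 1) (t m : ℕ) (d : Fin m → β) :
    ∑ b ∈ univ.filter (fun b : Fin (t + m) → β => (fun j => b (Fin.natAdd t j)) = d),
      ∏ i, w (b i) = ∏ j, w (d j) := by
  rw [sum_filter, ← (Fin.appendEquiv t m).sum_comp, Fintype.sum_prod_type]
  simp only [Fin.appendEquiv_apply, Fin.append_right, Fin.prod_univ_add, Fin.append_left,
    sum_ite_eq', mem_univ, if_true]
  rw [← sum_mul, ← Fintype.prod_sum fun (_ : Fin t) c => w c]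
  simp [hw]

lemma Subadditive.tendsto_lim_of_nonneg {u : ℕ → ℝ} (h : Subadditive u) (hu : ∀ n, 0 ≤ u n) :
    Tendsto (fun n => u n / n) atTop (nhds h.lim) :=
  h.tendsto_lim ⟨0, Set.forall_mem_range.2 fun n => div_nonneg (hu n) n.cast_nonneg⟩

section Entropy

variable {Ω : Type*} [MeasurableSpace Ω] {γ δ ε ζ : Type*}

/-- Measurability for the discrete σ-algebra on the codomain: all that `prm` needs, and it avoids
equipping every finite product and function type with a `MeasurableSpace`. -/
def MeasurableFibers (X : Ω → γ) : Prop := ∀ z, MeasurableSet (X ⁻¹' {z})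

namespace MeasurableFibers

lemma of_measurable [MeasurableSpace γ] [MeasurableSingletonClass γ] {X : Ω → γ}
    (hX : Measurable X) : MeasurableFibers X :=
  fun z => hX (measurableSet_singleton z)

lemma prodMk {X : Ω → γ} {W : Ω → δ} (hX : MeasurableFibers X) (hW : MeasurableFibers W) :
    MeasurableFibers (fun ω => (X ω, W ω)) := by
  intro z
  have hz : (fun ω => (X ω, W ω)) ⁻¹' {z} = X ⁻¹' {z.1} ∩ W ⁻¹' {z.2} := by
    ext; simp [Prod.ext_iff]
  exact hz ▸ (hX _).inter (hW _)

lemma pi {ι : Type*} [Countable ι] {X : ι → Ω → γ} (hX : ∀ i, MeasurableFibers (X i)) :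
    MeasurableFibers (fun ω i => X i ω) := by
  intro z
  have hz : (fun ω i => X i ω) ⁻¹' {z} = ⋂ i, X i ⁻¹' {z i} := by
    ext; simp [funext_iff]
  exact hz ▸ .iInter fun i => hX i _

lemma comp [Countable γ] {X : Ω → γ} (hX : MeasurableFibers X) (F : γ → δ) :
    MeasurableFibers (fun ω => F (X ω)) := by
  intro d
  show MeasurableSet (X ⁻¹' (F ⁻¹' {d}))
  rw [← Set.biUnion_preimage_singleton]
  exact .biUnion (Set.to_countable _) fun z _ => hX z

end MeasurableFibers

noncomputable def condEntm (μ : Measure Ω) [Fintype γ] [Fintype δ] (A : Ω → γ) (C : Ω → δ) :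
    ℝ :=
  entm μ (fun ω => (A ω, C ω)) - entm μ C

variable {μ : Measure Ω}

lemma prm_nonneg (X : Ω → γ) (z : γ) : 0 ≤ prm μ X z := ENNReal.toReal_nonneg

lemma prm_le_one [IsZeroOrProbabilityMeasure μ] (X : Ω → γ) (z : γ) : prm μ X z ≤ 1 :=
  measureReal_le_one

lemma prm_le_prm_comp [IsFiniteMeasure μ] (X : Ω → γ) (F : γ → δ) (z : γ) :
    prm μ X z ≤ prm μ (fun ω => F (X ω)) (F z) :=
  measureReal_mono fun _ hω => congrArg F hω

lemma prm_comp_eq_sum [IsFiniteMeasure μ] [Fintype γ] [DecidableEq δ] {X : Ω → γ}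
    (hX : MeasurableFibers X) (F : γ → δ) (d : δ) :
    prm μ (fun ω => F (X ω)) d = ∑ z ∈ univ.filter (F · = d), prm μ X z := by
  show μ.real _ = ∑ z ∈ _, μ.real _
  rw [sum_measureReal_preimage_singleton _ fun z _ => hX z]
  congr 1
  ext
  simp

lemma sum_prm_eq_one [IsProbabilityMeasure μ] [Fintype γ] {X : Ω → γ}
    (hX : MeasurableFibers X) : ∑ z, prm μ X z = 1 := by
  show ∑ z, μ.real _ = 1
  simpa using sum_measureReal_preimage_singleton (μ := μ) univ fun z _ => hX z

lemma sum_prm_prodMk_left [IsFiniteMeasure μ] [Fintype γ] [Fintype δ] {X : Ω → γ}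
    {W : Ω → δ} (hXW : MeasurableFibers (fun ω => (X ω, W ω))) (c : δ) :
    ∑ a, prm μ (fun ω => (X ω, W ω)) (a, c) = prm μ W c := by
  classical
  rw [show prm μ W c = prm μ (fun ω => (X ω, W ω).2) c from rfl, prm_comp_eq_sum hXW,
    sum_filter, Fintype.sum_prod_type]
  simp

lemma entm_nonneg [IsZeroOrProbabilityMeasure μ] [Fintype γ] (X : Ω → γ) : 0 ≤ entm μ X :=
  sum_nonneg fun z _ => negMulLog_nonneg (prm_nonneg X z) (prm_le_one X z)

lemma entm_congr [Fintype γ] {X W : Ω → γ} (h : ∀ z, prm μ X z = prm μ W z) :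
    entm μ X = entm μ W := by
  simp only [entm, h]

lemma entm_eq_zero_of_unique [IsProbabilityMeasure μ] [Fintype γ] [Unique γ] (X : Ω → γ) :
    entm μ X = 0 := by
  have hX : X ⁻¹' {default} = Set.univ := Set.eq_univ_of_forall fun ω => Unique.eq_default _
  simp [entm, prm, hX]

lemma entm_eq_of_comp_injective [Fintype γ] [Fintype δ] {V : Ω → γ} {W : Ω → δ} {F : γ → δ}
    (hF : Injective F) (hW : ∀ ω, W ω = F (V ω)) : entm μ W = entm μ V := by
  have hfiber : ∀ z, W ⁻¹' {F z} = V ⁻¹' {z} := fun z => by ext; simp [hW, hF.eq_iff]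
  refine (Fintype.sum_of_injective F hF _ _ (fun d hd => ?_) fun z => by rw [prm, prm, hfiber]).symm
  have hempty : W ⁻¹' {d} = ∅ := by
    ext ω
    simpa [hW] using fun h => hd ⟨V ω, h⟩
  simp [prm, hempty]

lemma entm_comp_eq_sum [IsFiniteMeasure μ] [Fintype γ] [Fintype δ] {X : Ω → γ}
    (hX : MeasurableFibers X) (F : γ → δ) :
    entm μ (fun ω => F (X ω)) = -∑ z, prm μ X z * log (prm μ (fun ω => F (X ω)) (F z)) := by
  classical
  rw [entm, ← sum_fiberwise univ F, ← sum_neg_distrib]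
  refine sum_congr rfl fun d _ => ?_
  rw [sum_congr rfl fun z hz => by rw [(mem_filter.1 hz).2], ← sum_mul, ← prm_comp_eq_sum hX F d,
    negMulLog, neg_mul]

lemma entm_comp_le [IsFiniteMeasure μ] [Fintype γ] [Fintype δ] {X : Ω → γ}
    (hX : MeasurableFibers X) (F : γ → δ) : entm μ (fun ω => F (X ω)) ≤ entm μ X := by
  rw [entm_comp_eq_sum hX, entm]
  simp only [negMulLog, neg_mul, sum_neg_distrib, neg_le_neg_iff]
  refine sum_le_sum fun z _ => ?_
  rcases (prm_nonneg (μ := μ) X z).eq_or_lt with h | h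
  · simp [← h]
  · exact mul_le_mul_of_nonneg_left (log_le_log h (prm_le_prm_comp X F z)) h.le

lemma entm_comp_eq_of_prm_eq [IsFiniteMeasure μ] [Fintype ζ] [Fintype γ] {Z Z' : Ω → ζ}
    (hZ : MeasurableFibers Z) (hZ' : MeasurableFibers Z') (h : ∀ z, prm μ Z z = prm μ Z' z)
    (F : ζ → γ) : entm μ (fun ω => F (Z ω)) = entm μ (fun ω => F (Z' ω)) := by
  classical
  exact entm_congr fun c => by simp only [prm_comp_eq_sum hZ, prm_comp_eq_sum hZ', h]

lemma prm_prodMk_comp_eq_mul [IsFiniteMeasure μ] [Fintype γ] [Fintype δ] {γ' δ' : Type*}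
    [DecidableEq γ'] [DecidableEq δ'] {U : Ω → γ} {V : Ω → δ}
    (hUV : MeasurableFibers (fun ω => (U ω, V ω))) {P : γ → ℝ} {Q : δ → ℝ}
    (hPQ : ∀ a b, prm μ (fun ω => (U ω, V ω)) (a, b) = P a * Q b) (f : γ → γ') (g : δ → δ')
    (c : γ') (d : δ') :
    prm μ (fun ω => (f (U ω), g (V ω))) (c, d)
      = (∑ a ∈ univ.filter (f · = c), P a) * ∑ b ∈ univ.filter (g · = d), Q b := by
  refine (prm_comp_eq_sum hUV (fun z => (f z.1, g z.2)) (c, d)).trans ?_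
  rw [sum_mul_sum, sum_filter, Fintype.sum_prod_type]
  simp only [sum_filter, Prod.mk.injEq, hPQ, ite_and]
  exact sum_congr rfl fun a _ => by split_ifs <;> simp

lemma condEntm_nonneg [IsFiniteMeasure μ] [Fintype γ] [Fintype δ] {A : Ω → γ} {C : Ω → δ}
    (h : MeasurableFibers (fun ω => (A ω, C ω))) : 0 ≤ condEntm μ A C :=
  sub_nonneg.2 (entm_comp_le h Prod.snd)

lemma condEntm_comp_eq_of_prm_eq [IsFiniteMeasure μ] [Fintype ζ] [Fintype γ] [Fintype δ]
    {Z Z' : Ω → ζ} (hZ : MeasurableFibers Z) (hZ' : MeasurableFibers Z')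
    (h : ∀ z, prm μ Z z = prm μ Z' z) (f : ζ → γ) (g : ζ → δ) :
    condEntm μ (fun ω => f (Z ω)) (fun ω => g (Z ω))
      = condEntm μ (fun ω => f (Z' ω)) (fun ω => g (Z' ω)) :=
  congrArg₂ (· - ·) (entm_comp_eq_of_prm_eq hZ hZ' h fun z => (f z, g z))
    (entm_comp_eq_of_prm_eq hZ hZ' h g)

section Probability

variable [IsProbabilityMeasure μ] [Fintype γ] [Fintype δ] [Fintype ε]

/-- `P(A = a, C = c) P(D = d, C = c) / P(C = c)`: the law of `(A, D, C)` after making `A` and `D`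
conditionally independent given `C`. -/
noncomputable def condIndepLaw (μ : Measure Ω) (A : Ω → γ) (D : Ω → δ) (C : Ω → ε)
    (z : γ × δ × ε) : ℝ :=
  prm μ (fun ω => (A ω, C ω)) (z.1, z.2.2) * prm μ (fun ω => (D ω, C ω)) z.2 / prm μ C z.2.2

lemma sum_condIndepLaw {A : Ω → γ} {D : Ω → δ} {C : Ω → ε}
    (h : MeasurableFibers (fun ω => (A ω, D ω, C ω))) : ∑ z, condIndepLaw μ A D C z = 1 := by
  have hmarg : ∀ c, ∑ a, ∑ d, condIndepLaw μ A D C (a, d, c) = prm μ C c := fun c => by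
    simp only [condIndepLaw, ← sum_div, ← mul_sum, ← sum_mul]
    rw [sum_prm_prodMk_left (h.comp fun z => (z.1, z.2.2)),
      sum_prm_prodMk_left (h.comp Prod.snd)]
    exact mul_self_div_self _
  rw [← sum_prm_eq_one (μ := μ) (h.comp fun z => z.2.2), ← sum_congr rfl fun c _ => hmarg c]
  simp only [Fintype.sum_prod_type]
  exact (sum_congr rfl fun a _ => sum_comm).trans sum_comm

lemma cmim_nonneg {A : Ω → γ} {D : Ω → δ} {C : Ω → ε}
    (h : MeasurableFibers (fun ω => (A ω, D ω, C ω))) : 0 ≤ cmim μ A D C := by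
  set q := prm μ (fun ω => (A ω, D ω, C ω))
  set qAC := prm μ (fun ω => (A ω, C ω))
  set qDC := prm μ (fun ω => (D ω, C ω))
  set qC := prm μ C
  have hAC : entm μ (fun ω => (A ω, C ω)) = -∑ z, q z * log (qAC (z.1, z.2.2)) :=
    entm_comp_eq_sum h fun z => (z.1, z.2.2)
  have hDC : entm μ (fun ω => (D ω, C ω)) = -∑ z, q z * log (qDC z.2) :=
    entm_comp_eq_sum h Prod.snd
  have hC : entm μ C = -∑ z, q z * log (qC z.2.2) := entm_comp_eq_sum h fun z => z.2.2
  have hADC : entm μ (fun ω => (A ω, D ω, C ω)) = -∑ z, q z * log (q z) := by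
    simp only [entm, negMulLog, neg_mul, sum_neg_distrib, q]
  have hpos : ∀ z, 0 < q z → 0 < qAC (z.1, z.2.2) ∧ 0 < qDC z.2 ∧ 0 < qC z.2.2 := fun z hz =>
    ⟨hz.trans_le (prm_le_prm_comp _ (fun z => (z.1, z.2.2)) z),
      hz.trans_le (prm_le_prm_comp _ Prod.snd z), hz.trans_le (prm_le_prm_comp _ (·.2.2) z)⟩
  have hlog : ∀ z, q z * log (condIndepLaw μ A D C z)
      = q z * log (qAC (z.1, z.2.2)) + q z * log (qDC z.2) - q z * log (qC z.2.2) := by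
    intro z
    rcases (prm_nonneg (μ := μ) (fun ω => (A ω, D ω, C ω)) z).eq_or_lt with h0 | h0
    · simp [q, ← h0]
    · obtain ⟨h1, h2, h3⟩ := hpos z h0
      rw [condIndepLaw, log_div (by positivity) h3.ne', log_mul h1.ne' h2.ne']
      ring
  have hgibbs := sum_mul_log_le_sum_mul_log (q := q) (r := condIndepLaw μ A D C) (prm_nonneg _)
    (fun z => div_nonneg (mul_nonneg (prm_nonneg _ _) (prm_nonneg _ _)) (prm_nonneg _ _))
    (fun z hz => by obtain ⟨h1, h2, h3⟩ := hpos z hz; exact div_pos (mul_pos h1 h2) h3)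
    ((sum_condIndepLaw h).trans (sum_prm_eq_one h).symm).le
  simp only [hlog, sum_sub_distrib, sum_add_distrib] at hgibbs
  rw [cmim, hAC, hDC, hC, hADC]
  linarith

lemma entm_prodMk_le {A : Ω → γ} {D : Ω → δ}
    (h : MeasurableFibers (fun ω => (A ω, D ω))) :
    entm μ (fun ω => (A ω, D ω)) ≤ entm μ A + entm μ D := by
  have hI := cmim_nonneg (μ := μ) (C := fun _ => ()) (h.comp fun z => (z.1, z.2, ()))
  have hA : entm μ (fun ω => (A ω, ())) = entm μ A :=
    entm_eq_of_comp_injective (F := fun a => (a, ())) (fun _ _ h => congrArg Prod.fst h)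
      fun _ => rfl
  have hD : entm μ (fun ω => (D ω, ())) = entm μ D :=
    entm_eq_of_comp_injective (F := fun d => (d, ())) (fun _ _ h => congrArg Prod.fst h)
      fun _ => rfl
  have hAD : entm μ (fun ω => (A ω, D ω, ())) = entm μ (fun ω => (A ω, D ω)) :=
    entm_eq_of_comp_injective (F := fun z => (z.1, z.2, ()))
      (fun _ _ h => by simpa [Prod.ext_iff] using h) fun _ => rfl
  rw [cmim, hA, hD, hAD, entm_eq_zero_of_unique fun _ : Ω => ()] at hI
  linarith

lemma condEntm_le_condEntm_comp {A : Ω → γ} {C : Ω → δ}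
    (h : MeasurableFibers (fun ω => (A ω, C ω))) (F : δ → ε) :
    condEntm μ A C ≤ condEntm μ A (fun ω => F (C ω)) := by
  have hI := cmim_nonneg (μ := μ) (D := C) (C := fun ω => F (C ω))
    (h.comp fun z => (z.1, z.2, F z.2))
  have hC : entm μ (fun ω => (C ω, F (C ω))) = entm μ C :=
    entm_eq_of_comp_injective (F := fun c => (c, F c)) (fun _ _ h => congrArg Prod.fst h)
      fun _ => rfl
  have hAC : entm μ (fun ω => (A ω, C ω, F (C ω))) = entm μ (fun ω => (A ω, C ω)) :=
    entm_eq_of_comp_injective (F := fun z => (z.1, z.2, F z.2))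
      (fun _ _ h => by simp_all [Prod.ext_iff]) fun _ => rfl
  rw [cmim, hC, hAC] at hI
  rw [condEntm, condEntm]
  linarith

end Probability

end Entropy

section BlockEntropy

variable {Ω : Type*} [MeasurableSpace Ω] {α : Type*}

def IsStationaryProcess (μ : Measure Ω) (X : ℕ → Ω → α) : Prop :=
  ∀ (n t : ℕ) (a : Fin n → α),
    prm μ (fun ω (j : Fin n) => X (j.1 + t) ω) a = prm μ (fun ω (j : Fin n) => X j.1 ω) a

def IsIndepBernoulliMask (μ : Measure Ω) (X : ℕ → Ω → α) (B : ℕ → Ω → Bool) (p : ℝ) :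
    Prop :=
  ∀ (n : ℕ) (a : Fin n → α) (b : Fin n → Bool),
    prm μ (fun ω => ((fun j : Fin n => X j.1 ω), fun j : Fin n => B j.1 ω)) (a, b)
      = prm μ (fun ω (j : Fin n) => X j.1 ω) a * ∏ j, (if b j then p else 1 - p)

noncomputable def blockEntropy (μ : Measure Ω) [Fintype α] (X : ℕ → Ω → α) (n : ℕ) : ℝ :=
  entm μ (fun ω (j : Fin n) => X j.1 ω)

def futureAndPast {β : Type*} (Y : ℕ → Ω → β) (X : ℕ → Ω → α) (n : ℕ) (i : Fin n) :
    Ω → ({j : Fin n // i < j} → β) × ({j : Fin n // j < i} → α) :=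
  fun ω => (fun j => Y j.1.1 ω, fun j => X j.1.1 ω)

noncomputable def residualEntropy (μ : Measure Ω) [Fintype α] {β : Type*} [Fintype β]
    (X : ℕ → Ω → α) (Y : ℕ → Ω → β) (n : ℕ) : ℝ :=
  ∑ i : Fin n, condEntm μ (X i.1) (futureAndPast Y X n i)

variable {μ : Measure Ω} {X : ℕ → Ω → α}

lemma IsStationaryProcess.prm_shift (hX : IsStationaryProcess μ X) (t m : ℕ) (a : Fin m → α) :
    prm μ (fun ω (j : Fin m) => X (t + j.1) ω) a = prm μ (fun ω (j : Fin m) => X j.1 ω) a := by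
  simpa only [Nat.add_comm _ t] using hX m t a

lemma MeasurableFibers.futureAndPast {β : Type*} {Y : ℕ → Ω → β}
    (hX : ∀ i, MeasurableFibers (X i)) (hY : ∀ i, MeasurableFibers (Y i)) (n : ℕ) (i : Fin n) :
    MeasurableFibers (fun ω => (X i.1 ω, futureAndPast Y X n i ω)) :=
  (hX _).prodMk ((MeasurableFibers.pi fun _ => hY _).prodMk (.pi fun _ => hX _))

variable [Fintype α]

lemma blockEntropy_nonneg [IsProbabilityMeasure μ] (X : ℕ → Ω → α) (n : ℕ) :
    0 ≤ blockEntropy μ X n :=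
  entm_nonneg _

lemma blockEntropy_zero [IsProbabilityMeasure μ] (X : ℕ → Ω → α) : blockEntropy μ X 0 = 0 :=
  entm_eq_zero_of_unique _

lemma blockEntropy_add_le [IsProbabilityMeasure μ] (hX : ∀ i, MeasurableFibers (X i))
    (hstat : IsStationaryProcess μ X) (n m : ℕ) :
    blockEntropy μ X (n + m) ≤ blockEntropy μ X n + blockEntropy μ X m := by
  have hsplit : blockEntropy μ X (n + m)
      = entm μ (fun ω => (fun j : Fin n => X j.1 ω, fun j : Fin m => X (n + j.1) ω)) :=
    (entm_eq_of_comp_injective (Fin.appendEquiv n m).symm.injective fun _ => rfl).symm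
  rw [hsplit, blockEntropy, blockEntropy, ← entm_congr (hstat.prm_shift n m)]
  exact entm_prodMk_le ((MeasurableFibers.pi fun _ => hX _).prodMk (.pi fun _ => hX _))

lemma cmim_eq_blockEntropy_sub {β : Type*} [Fintype β] (Y : ℕ → Ω → β) (n : ℕ) (i : Fin n) :
    cmim μ (fun ω (j : {j : Fin n // i < j}) => Y j.1.1 ω) (X i.1)
        (fun ω (j : {j : Fin n // j < i}) => X j.1.1 ω)
      = blockEntropy μ X (i.1 + 1) - blockEntropy μ X i.1
        - condEntm μ (X i.1) (futureAndPast Y X n i) := by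
  let e : ({j : Fin n // j < i} → α) → Fin i.1 → α := fun f k => f ⟨⟨k, k.2.trans i.2⟩, k.2⟩
  have he : Injective e := fun f g h => funext fun j => congrFun h ⟨j.1.1, j.2⟩
  have hXl : entm μ (fun ω (j : {j : Fin n // j < i}) => X j.1.1 ω) = blockEntropy μ X i.1 :=
    (entm_eq_of_comp_injective he fun _ => rfl).symm
  have hXXl : entm μ (fun ω => (X i.1 ω, fun j : {j : Fin n // j < i} => X j.1.1 ω))
      = blockEntropy μ X (i.1 + 1) :=
    (entm_eq_of_comp_injective (F := fun z => (e z.2, z.1))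
        (fun _ _ h => Prod.ext (congrArg Prod.snd h) (he (congrArg Prod.fst h)))
        fun _ => rfl).symm.trans
      (entm_eq_of_comp_injective (Fin.succFunEquiv α i.1).injective fun _ => rfl)
  have hYXXl : entm μ (fun ω => (fun j : {j : Fin n // i < j} => Y j.1.1 ω, X i.1 ω,
        fun j : {j : Fin n // j < i} => X j.1.1 ω))
      = entm μ (fun ω => (X i.1 ω, futureAndPast Y X n i ω)) :=
    entm_eq_of_comp_injective (F := fun z => (z.2.1, z.1, z.2.2))
      (fun _ _ h => by simp_all [Prod.ext_iff]) fun _ => rfl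
  rw [cmim, condEntm, hXl, hXXl, hYXXl]
  unfold futureAndPast
  ring

lemma sum_cmim_eq_sub [IsProbabilityMeasure μ] {β : Type*} [Fintype β] (Y : ℕ → Ω → β)
    (n : ℕ) :
    ∑ i : Fin n, cmim μ (fun ω (j : {j : Fin n // i < j}) => Y j.1.1 ω) (X i.1)
        (fun ω (j : {j : Fin n // j < i}) => X j.1.1 ω)
      = blockEntropy μ X n - residualEntropy μ X Y n := by
  rw [sum_congr rfl fun i _ => cmim_eq_blockEntropy_sub Y n i, sum_sub_distrib,
    Fin.sum_univ_eq_sum_range (fun k => blockEntropy μ X (k + 1) - blockEntropy μ X k),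
    sum_range_sub, blockEntropy_zero, sub_zero]
  rfl

lemma residualEntropy_nonneg [IsProbabilityMeasure μ] {β : Type*} [Fintype β]
    {Y : ℕ → Ω → β} (hX : ∀ i, MeasurableFibers (X i)) (hY : ∀ i, MeasurableFibers (Y i))
    (n : ℕ) : 0 ≤ residualEntropy μ X Y n :=
  sum_nonneg fun i _ => condEntm_nonneg (MeasurableFibers.futureAndPast hX hY n i)

lemma residualEntropy_le_blockEntropy [IsProbabilityMeasure μ] {β : Type*} [Fintype β]
    {Y : ℕ → Ω → β} (hX : ∀ i, MeasurableFibers (X i)) (hY : ∀ i, MeasurableFibers (Y i))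
    (n : ℕ) : residualEntropy μ X Y n ≤ blockEntropy μ X n := by
  rw [← sub_nonneg, ← sum_cmim_eq_sub]
  exact sum_nonneg fun i _ => cmim_nonneg
    ((MeasurableFibers.pi fun _ => hY _).prodMk ((hX _).prodMk (.pi fun _ => hX _)))

end BlockEntropy

section Erasure

variable {Ω : Type*} [MeasurableSpace Ω] {μ : Measure Ω} {α : Type*} [Fintype α]
  {X : ℕ → Ω → α} {B : ℕ → Ω → Bool} {p : ℝ}

lemma prm_shift_prodMk_eq [IsFiniteMeasure μ] (hX : ∀ i, MeasurableFibers (X i))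
    (hB : ∀ i, MeasurableFibers (B i)) (hstat : IsStationaryProcess μ X)
    (hmask : IsIndepBernoulliMask μ X B p) (t m : ℕ) (z : (Fin m → α) × (Fin m → Bool)) :
    prm μ (fun ω => (fun j : Fin m => X (t + j.1) ω, fun j : Fin m => B (t + j.1) ω)) z
      = prm μ (fun ω => (fun j : Fin m => X j.1 ω, fun j : Fin m => B j.1 ω)) z := by
  classical
  obtain ⟨a, b⟩ := z
  have hw : ∑ c : Bool, (if c then p else 1 - p) = 1 := by simp
  have hXt : MeasurableFibers fun ω (j : Fin (t + m)) => X j.1 ω := .pi fun _ => hX _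
  calc prm μ (fun ω => (fun j : Fin m => X (t + j.1) ω, fun j : Fin m => B (t + j.1) ω)) (a, b)
      = (∑ x ∈ univ.filter (fun x : Fin (t + m) → α => (fun j => x (Fin.natAdd t j)) = a),
            prm μ (fun ω (j : Fin (t + m)) => X j.1 ω) x)
          * ∑ c ∈ univ.filter (fun c : Fin (t + m) → Bool => (fun j => c (Fin.natAdd t j)) = b),
            ∏ j, (if c j then p else 1 - p) :=
        prm_prodMk_comp_eq_mul (hXt.prodMk (.pi fun _ => hB _)) (hmask (t + m))
          (fun x j => x (Fin.natAdd t j)) (fun c j => c (Fin.natAdd t j)) a b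
    _ = prm μ (fun ω (j : Fin m) => X j.1 ω) a * ∏ j, (if b j then p else 1 - p) := by
        rw [← prm_comp_eq_sum hXt, sum_prod_filter_natAdd_eq hw]
        exact congrArg (· * _) (hstat.prm_shift t m a)
    _ = _ := (hmask m a b).symm

lemma MeasurableFibers.of_erasure {Y : Ω → Option α} {x : Ω → α} {b : Ω → Bool}
    (hx : MeasurableFibers x) (hb : MeasurableFibers b)
    (hY : ∀ ω, Y ω = if b ω then some (x ω) else none) : MeasurableFibers Y := by
  obtain rfl : Y = _ := funext hY
  exact (hx.prodMk hb).comp fun z => if z.2 then some z.1 else none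

lemma condEntm_castAdd_le [IsProbabilityMeasure μ] {β : Type*} [Fintype β] {Y : ℕ → Ω → β}
    (hX : ∀ i, MeasurableFibers (X i)) (hY : ∀ i, MeasurableFibers (Y i)) (n m : ℕ)
    (i : Fin n) :
    condEntm μ (X (Fin.castAdd m i).1) (futureAndPast Y X (n + m) (Fin.castAdd m i))
      ≤ condEntm μ (X i.1) (futureAndPast Y X n i) :=
  condEntm_le_condEntm_comp (MeasurableFibers.futureAndPast hX hY (n + m) (Fin.castAdd m i))
    fun c => ((fun j => c.1 ⟨Fin.castAdd m j.1, j.2⟩ : {j : Fin n // i < j} → β),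
      (fun j => c.2 ⟨Fin.castAdd m j.1, j.2⟩ : {j : Fin n // j < i} → α))

lemma condEntm_natAdd_le [IsProbabilityMeasure μ] {Y : ℕ → Ω → Option α}
    (hX : ∀ i, MeasurableFibers (X i)) (hB : ∀ i, MeasurableFibers (B i))
    (hstat : IsStationaryProcess μ X) (hmask : IsIndepBernoulliMask μ X B p)
    (hY : ∀ i ω, Y i ω = if B i ω then some (X i ω) else none) (n m : ℕ) (k : Fin m) :
    condEntm μ (X (Fin.natAdd n k).1) (futureAndPast Y X (n + m) (Fin.natAdd n k))
      ≤ condEntm μ (X k.1) (futureAndPast Y X m k) := by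
  obtain rfl : Y = fun i ω => if B i ω then some (X i ω) else none := funext fun i => funext (hY i)
  let Z (t : ℕ) (ω : Ω) := (fun j : Fin m => X (t + j.1) ω, fun j : Fin m => B (t + j.1) ω)
  let Z₀ (ω : Ω) := (fun j : Fin m => X j.1 ω, fun j : Fin m => B j.1 ω)
  -- both sides are read off the window `(X, B)` on `[t, t + m)`, with `t = n` and `t = 0`
  let f (z : (Fin m → α) × (Fin m → Bool)) : α := z.1 k
  let g (z : (Fin m → α) × (Fin m → Bool)) :
      ({j : Fin m // k < j} → Option α) × ({j : Fin m // j < k} → α) :=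
    (fun j => if z.2 j.1 then some (z.1 j.1) else none, fun j => z.1 j.1)
  have hZ : MeasurableFibers (Z n) := (MeasurableFibers.pi fun _ => hX _).prodMk (.pi fun _ => hB _)
  have hZ₀ : MeasurableFibers Z₀ := (MeasurableFibers.pi fun _ => hX _).prodMk (.pi fun _ => hB _)
  have hYf : ∀ i, MeasurableFibers fun ω => if B i ω then some (X i ω) else none :=
    fun i => .of_erasure (hX i) (hB i) fun _ => rfl
  calc condEntm μ (X (Fin.natAdd n k).1) (futureAndPast _ X (n + m) (Fin.natAdd n k))
      ≤ condEntm μ (fun ω => f (Z n ω)) (fun ω => g (Z n ω)) :=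
        condEntm_le_condEntm_comp (MeasurableFibers.futureAndPast hX hYf _ _)
          fun c => ((fun j => c.1 ⟨Fin.natAdd n j.1, Nat.add_lt_add_left j.2 n⟩ :
              {j : Fin m // k < j} → Option α),
            (fun j => c.2 ⟨Fin.natAdd n j.1, Nat.add_lt_add_left j.2 n⟩ :
              {j : Fin m // j < k} → α))
    _ = condEntm μ (fun ω => f (Z₀ ω)) (fun ω => g (Z₀ ω)) :=
        condEntm_comp_eq_of_prm_eq hZ hZ₀ (prm_shift_prodMk_eq hX hB hstat hmask n m) f g

lemma residualEntropy_add_le [IsProbabilityMeasure μ] {Y : ℕ → Ω → Option α}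
    (hX : ∀ i, MeasurableFibers (X i)) (hB : ∀ i, MeasurableFibers (B i))
    (hstat : IsStationaryProcess μ X) (hmask : IsIndepBernoulliMask μ X B p)
    (hY : ∀ i ω, Y i ω = if B i ω then some (X i ω) else none) (n m : ℕ) :
    residualEntropy μ X Y (n + m) ≤ residualEntropy μ X Y n + residualEntropy μ X Y m := by
  have hYf : ∀ i, MeasurableFibers (Y i) := fun i => .of_erasure (hX i) (hB i) (hY i)
  rw [residualEntropy, Fin.sum_univ_add]
  exact add_le_add (sum_le_sum fun i _ => condEntm_castAdd_le hX hYf n m i)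
    (sum_le_sum fun k _ => condEntm_natAdd_le hX hB hstat hmask hY n m k)

end Erasure

/-- For a stationary finite-alphabet process observed through i.i.d. erasures, the
entropy rate `H̄(X)` and the limit `a = lim (1/n) ∑ᵢ I(Y_{i+1}ⁿ; Xᵢ | X₁^{i-1})` both
exist, with `0 ≤ a ≤ H̄(X)`. -/
theorem stationary_correction_limit {Ω : Type*} [MeasurableSpace Ω]
    (μ : Measure Ω) [IsProbabilityMeasure μ]
    {α : Type*} [Fintype α] [MeasurableSpace α] [MeasurableSingletonClass α]
    (p : ℝ) (X : ℕ → Ω → α) (B : ℕ → Ω → Bool)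
    (hX : ∀ i, Measurable (X i)) (hB : ∀ i, Measurable (B i))
    (hstat : ∀ (n t : ℕ) (a : Fin n → α),
      prm μ (fun ω (j : Fin n) => X (j.1 + t) ω) a
        = prm μ (fun ω (j : Fin n) => X j.1 ω) a)
    (hind : ∀ (n : ℕ) (a : Fin n → α) (b : Fin n → Bool),
      prm μ (fun ω => ((fun j : Fin n => X j.1 ω), fun j : Fin n => B j.1 ω)) (a, b)
        = prm μ (fun ω (j : Fin n) => X j.1 ω) a * ∏ j, (if b j then p else 1 - p))
    (Y : ℕ → Ω → Option α) (hY : ∀ i ω, Y i ω = if B i ω then some (X i ω) else none) :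
    ∃ hbar a : ℝ,
      Tendsto (fun n : ℕ => entm μ (fun ω (j : Fin n) => X j.1 ω) / n) atTop (nhds hbar) ∧
      Tendsto (fun n : ℕ => (1 / n : ℝ) * ∑ i : Fin n,
          cmim μ (fun ω => fun j : {j : Fin n // i < j} => Y j.1.1 ω) (X i.1)
            (fun ω => fun j : {j : Fin n // j < i} => X j.1.1 ω))
        atTop (nhds a) ∧
      0 ≤ a ∧ a ≤ hbar := by
  have hXf i := MeasurableFibers.of_measurable (hX i)
  have hBf i := MeasurableFibers.of_measurable (hB i)
  have hYf i := MeasurableFibers.of_erasure (hXf i) (hBf i) (hY i)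
  have hH : Subadditive (blockEntropy μ X) := blockEntropy_add_le hXf hstat
  have hT : Subadditive (residualEntropy μ X Y) := residualEntropy_add_le hXf hBf hstat hind hY
  have hHlim := hH.tendsto_lim_of_nonneg (blockEntropy_nonneg X)
  have hTlim := hT.tendsto_lim_of_nonneg (residualEntropy_nonneg hXf hYf)
  refine ⟨hH.lim, hH.lim - hT.lim, hHlim, (hHlim.sub hTlim).congr fun n => ?_, ?_, ?_⟩
  · rw [sum_cmim_eq_sub]
    ring
  · exact sub_nonneg.2 <| le_of_tendsto_of_tendsto' hTlim hHlim fun n =>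
      div_le_div_of_nonneg_right (residualEntropy_le_blockEntropy hXf hYf n) n.cast_nonneg
  · exact sub_le_self _ <| ge_of_tendsto' hTlim fun n =>
      div_nonneg (residualEntropy_nonneg hXf hYf n) n.cast_nonneg
end

section
/- Let X₁,…,X_k be discrete random variables on finite alphabets and Z₁,…,Z_k discrete random variables such that each Z_ℓ is conditionally independent of (X_j)_{j≠ℓ} and (Z_j)_{j≠ℓ} given X_ℓ. Then H(Z₁,…,Z_k) − ∑_{ℓ=1}^k H(Z_ℓ | X_ℓ) = I(X₁,…,X_k; Z₁,…,Z_k), and ∑_{ℓ=1}^k I(X_ℓ; Z_ℓ) = I(X₁,…,X_k; Z₁,…,Z_k) + ∑_{ℓ=1}^k I(Z_ℓ; Z₁,…,Z_{ℓ−1}). -/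
open Real Finset

/-!
Every entropy is an expectation, `H(Y) = -∑ ω, f ω * log p_Y(Y ω)`, and each probability in the
logarithm is at least `f ω`. Hence the factorisation `p(u,v,w) p(w) = p(u,w) p(v,w)` makes
`I(U;V|W)` vanish term by term, and it survives replacing `V` by a function of `V`. With `V` the
pair `((X_j)_{j≠ℓ}, Z_{<ℓ})` this gives `H(Z_ℓ | X, Z_{<ℓ}) = H(Z_ℓ | X_ℓ)`, so the chain rule
`H(X, Z) = H(X) + ∑ ℓ, H(Z_ℓ | X, Z_{<ℓ})` yields the first identity. The second follows from the
first together with `H(Z) = ∑ ℓ, H(Z_ℓ | Z_{<ℓ})` and `I(Z_ℓ; Z_{<ℓ}) = H(Z_ℓ) - H(Z_ℓ | Z_{<ℓ})`.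
-/

section Entropy

variable {Ω A B C : Type*} [Fintype Ω] (f : Ω → ℝ)

theorem le_pr_apply (hf0 : ∀ ω, 0 ≤ f ω) (Y : Ω → A) (ω : Ω) : f ω ≤ pr f Y (Y ω) := by
  classical
  calc f ω = if Y ω = Y ω then f ω else 0 := (if_pos rfl).symm
    _ ≤ pr f Y (Y ω) :=
      single_le_sum (f := fun ω' => if Y ω' = Y ω then f ω' else 0)
        (fun ω' _ => by split_ifs <;> simp [hf0]) (mem_univ ω)

theorem pr_comp_apply_of_injective (Y : Ω → A) {e : A → B} (he : e.Injective) (a : A) :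
    pr f (fun ω => e (Y ω)) (e a) = pr f Y a := by
  classical
  simp only [pr, he.eq_iff]

theorem ent_eq_neg_sum_mul_log [Fintype A] (Y : Ω → A) :
    ent f Y = -∑ ω, f ω * log (pr f Y (Y ω)) := by
  classical
  simp only [ent, negMulLog, pr, neg_mul, sum_neg_distrib, sum_mul, ite_mul, zero_mul]
  rw [sum_comm]
  simp

theorem ent_comp_of_injective_s16 [Fintype A] [Fintype B] (Y : Ω → A) {e : A → B}
    (he : e.Injective) : ent f (fun ω => e (Y ω)) = ent f Y := by
  simp only [ent_eq_neg_sum_mul_log, pr_comp_apply_of_injective f Y he]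

theorem condEnt_comp_right_of_injective [Fintype A] [Fintype B] [Fintype C]
    (U : Ω → A) (S : Ω → B) {e : B → C} (he : e.Injective) :
    condEnt f U (fun ω => e (S ω)) = condEnt f U S := by
  simp only [condEnt, ent_comp_of_injective_s16 f S he]
  rw [← ent_comp_of_injective_s16 f (fun ω => (U ω, S ω)) (Function.injective_id.prodMap he)]
  rfl

theorem ent_const_unit (hf1 : ∑ ω, f ω = 1) : ent f (fun _ => ()) = 0 := by
  simp [ent, pr, hf1]

theorem mi_comm [Fintype A] [Fintype B] (X : Ω → A) (Y : Ω → B) : mi f X Y = mi f Y X := by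
  simp only [mi]
  rw [← ent_comp_of_injective_s16 f (fun ω => (X ω, Y ω)) Prod.swap_injective]
  simp only [Prod.swap_prod_mk]
  ring

theorem mi_eq_ent_sub_condEnt [Fintype A] [Fintype B] (X : Ω → A) (Y : Ω → B) :
    mi f X Y = ent f X - condEnt f X Y := by
  simp only [mi, condEnt]
  ring

end Entropy

section CondIndep

variable {Ω A B B' C : Type*} [Fintype Ω] (f : Ω → ℝ)

def CondIndep (U : Ω → A) (V : Ω → B) (W : Ω → C) : Prop :=
  ∀ a b c, pr f (fun ω => (U ω, V ω, W ω)) (a, b, c) * pr f W c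
    = pr f (fun ω => (U ω, W ω)) (a, c) * pr f (fun ω => (V ω, W ω)) (b, c)

theorem pr_comp_fst_eq_sum [Fintype B] [DecidableEq B'] (V : Ω → B) (W : Ω → C) (g : B → B')
    (b' : B') (c : C) :
    pr f (fun ω => (g (V ω), W ω)) (b', c)
      = ∑ b ∈ univ.filter (fun b => g b = b'), pr f (fun ω => (V ω, W ω)) (b, c) := by
  classical
  simp only [pr]
  rw [sum_comm]
  refine sum_congr rfl fun ω _ => ?_
  simp [Prod.ext_iff, ite_and]

theorem pr_comp_mid_eq_sum [Fintype B] [DecidableEq B'] (U : Ω → A) (V : Ω → B) (W : Ω → C)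
    (g : B → B') (a : A) (b' : B') (c : C) :
    pr f (fun ω => (U ω, g (V ω), W ω)) (a, b', c)
      = ∑ b ∈ univ.filter (fun b => g b = b'), pr f (fun ω => (U ω, V ω, W ω)) (a, b, c) := by
  classical
  simp only [pr]
  rw [sum_comm]
  refine sum_congr rfl fun ω _ => ?_
  simp [Prod.ext_iff, ite_and]

theorem CondIndep.comp_mid [Fintype B] {U : Ω → A} {V : Ω → B} {W : Ω → C}
    (h : CondIndep f U V W) (g : B → B') : CondIndep f U (fun ω => g (V ω)) W := by
  classical
  intro a b' c
  rw [pr_comp_mid_eq_sum, pr_comp_fst_eq_sum f V W, sum_mul, mul_sum]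
  exact sum_congr rfl fun b _ => h a b c

theorem cmi_eq_zero_of_condIndep [Fintype A] [Fintype B] [Fintype C] (hf0 : ∀ ω, 0 ≤ f ω)
    {U : Ω → A} {V : Ω → B} {W : Ω → C} (h : CondIndep f U V W) : cmi f U V W = 0 := by
  have hterm : ∀ ω, f ω * log (pr f (fun ω => (U ω, V ω, W ω)) (U ω, V ω, W ω))
        + f ω * log (pr f W (W ω))
      = f ω * log (pr f (fun ω => (U ω, W ω)) (U ω, W ω))
        + f ω * log (pr f (fun ω => (V ω, W ω)) (V ω, W ω)) := by
    intro ω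
    rcases (hf0 ω).eq_or_lt with hω | hω
    · simp [← hω]
    simp only [← mul_add]
    rw [← log_mul, ← log_mul, h (U ω) (V ω) (W ω)]
    all_goals exact (hω.trans_le (le_pr_apply f hf0 _ ω)).ne'
  calc cmi f U V W
      = ∑ ω, (f ω * log (pr f (fun ω => (U ω, V ω, W ω)) (U ω, V ω, W ω))
          + f ω * log (pr f W (W ω))
          - (f ω * log (pr f (fun ω => (U ω, W ω)) (U ω, W ω))
            + f ω * log (pr f (fun ω => (V ω, W ω)) (V ω, W ω)))) := by
        simp only [cmi, ent_eq_neg_sum_mul_log, sum_sub_distrib, sum_add_distrib]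
        ring
    _ = 0 := sum_eq_zero fun ω _ => by rw [hterm, sub_self]

theorem condEnt_pair_eq_of_condIndep [Fintype A] [Fintype B] [Fintype C]
    (hf0 : ∀ ω, 0 ≤ f ω) {U : Ω → A} {V : Ω → B} {W : Ω → C} (h : CondIndep f U V W) :
    condEnt f U (fun ω => (V ω, W ω)) = condEnt f U W := by
  have h0 := cmi_eq_zero_of_condIndep f hf0 h
  simp only [cmi] at h0
  simp only [condEnt]
  linarith

end CondIndep

section ChainRule

variable {Ω B : Type*} [Fintype Ω] [Fintype B] (f : Ω → ℝ)
  {k : ℕ} {γ : Fin k → Type*} [∀ ℓ, Fintype (γ ℓ)]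

/-- `Z_{<m}`, indexed by `m : ℕ` rather than `Fin k` so that the chain rule can telescope up to
`m = k`. -/
def prefixVar (Z : ∀ ℓ, Ω → γ ℓ) (m : ℕ) : Ω → ∀ j : {j : Fin k // j.val < m}, γ j.1 :=
  fun ω j => Z j.1 ω

theorem ent_pair_prefixVar_zero (S : Ω → B) (Z : ∀ ℓ, Ω → γ ℓ) :
    ent f (fun ω => (S ω, prefixVar Z 0 ω)) = ent f S := by
  have : IsEmpty {j : Fin k // j.val < 0} := ⟨fun j => Nat.not_lt_zero _ j.2⟩
  exact (ent_comp_of_injective_s16 f _ Prod.fst_injective).symm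

theorem ent_pair_prefixVar_succ (S : Ω → B) (Z : ∀ ℓ, Ω → γ ℓ) (ℓ : Fin k) :
    ent f (fun ω => (S ω, prefixVar Z (ℓ + 1) ω))
      = ent f (fun ω => (Z ℓ ω, S ω, prefixVar Z ℓ ω)) := by
  let split : B × (∀ j : {j : Fin k // j.val < ℓ + 1}, γ j.1)
      → γ ℓ × B × ∀ j : {j : Fin k // j.val < ℓ}, γ j.1 :=
    fun p => (p.2 ⟨ℓ, Nat.lt_succ_self _⟩, p.1, fun j => p.2 ⟨j.1, Nat.lt_succ_of_lt j.2⟩)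
  have hsplit : split.Injective := by
    rintro ⟨s, z⟩ ⟨s', z'⟩ h
    simp only [split, Prod.mk.injEq] at h
    obtain ⟨hlast, rfl, hinit⟩ := h
    refine Prod.ext rfl (funext fun j => ?_)
    rcases (Nat.lt_succ_iff.mp j.2).lt_or_eq with hj | hj
    · exact congrFun hinit ⟨j.1, hj⟩
    · obtain rfl : j = ⟨ℓ, Nat.lt_succ_self _⟩ := Subtype.ext (Fin.ext hj)
      exact hlast
  exact (ent_comp_of_injective_s16 f _ hsplit).symm

theorem ent_pair_prefixVar_last (S : Ω → B) (Z : ∀ ℓ, Ω → γ ℓ) :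
    ent f (fun ω => (S ω, prefixVar Z k ω)) = ent f (fun ω => (S ω, fun ℓ => Z ℓ ω)) := by
  have hres : (fun z : ∀ ℓ, γ ℓ => fun j : {j : Fin k // j.val < k} => z j.1).Injective :=
    fun z z' h => funext fun ℓ => congrFun h ⟨ℓ, ℓ.2⟩
  exact ent_comp_of_injective_s16 f (fun ω => (S ω, fun ℓ => Z ℓ ω))
    (Function.injective_id.prodMap hres)

theorem ent_pair_eq_add_sum_condEnt (S : Ω → B) (Z : ∀ ℓ, Ω → γ ℓ) :
    ent f (fun ω => (S ω, fun ℓ => Z ℓ ω))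
      = ent f S + ∑ ℓ, condEnt f (Z ℓ) (fun ω => (S ω, prefixVar Z ℓ ω)) := by
  set G : ℕ → ℝ := fun m => ent f (fun ω => (S ω, prefixVar Z m ω))
  have hstep : ∀ ℓ : Fin k,
      condEnt f (Z ℓ) (fun ω => (S ω, prefixVar Z ℓ ω)) = G (ℓ + 1) - G ℓ :=
    fun ℓ => by simp only [condEnt, G, ent_pair_prefixVar_succ]
  rw [sum_congr rfl fun ℓ _ => hstep ℓ, Fin.sum_univ_eq_sum_range (fun m => G (m + 1) - G m),
    sum_range_sub]
  simp only [G, ent_pair_prefixVar_zero, ent_pair_prefixVar_last]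
  ring

theorem ent_eq_sum_condEnt (hf1 : ∑ ω, f ω = 1) (Z : ∀ ℓ, Ω → γ ℓ) :
    ent f (fun ω ℓ => Z ℓ ω) = ∑ ℓ, condEnt f (Z ℓ) (prefixVar Z ℓ) := by
  refine (ent_comp_of_injective_s16 f (fun ω => ((), fun ℓ => Z ℓ ω)) Prod.snd_injective).trans ?_
  rw [ent_pair_eq_add_sum_condEnt, ent_const_unit f hf1, zero_add]
  exact sum_congr rfl fun ℓ _ =>
    condEnt_comp_right_of_injective f _ _ (Prod.mk_right_injective ())

end ChainRule

theorem condEnt_pair_prefixVar_eq_of_condIndep {Ω : Type*} [Fintype Ω] (f : Ω → ℝ)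
    (hf0 : ∀ ω, 0 ≤ f ω) {k : ℕ} {α γ : Fin k → Type*} [∀ ℓ, Fintype (α ℓ)]
    [∀ ℓ, Fintype (γ ℓ)] (X : ∀ ℓ, Ω → α ℓ) (Z : ∀ ℓ, Ω → γ ℓ) (ℓ : Fin k)
    (h : CondIndep f (Z ℓ) (fun ω (j : {j : Fin k // j ≠ ℓ}) => (X j ω, Z j ω)) (X ℓ)) :
    condEnt f (Z ℓ) (fun ω => ((fun j => X j ω), prefixVar Z ℓ ω)) = condEnt f (Z ℓ) (X ℓ) := by
  let restrict : (∀ j : {j : Fin k // j ≠ ℓ}, α j × γ j)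
      → (∀ j : {j : Fin k // j ≠ ℓ}, α j) × ∀ j : {j : Fin k // j.val < ℓ}, γ j :=
    fun w => (fun j => (w j).1, fun j => (w ⟨j.1, ne_of_lt (show j.1 < ℓ from j.2)⟩).2)
  let split : (∀ j, α j) × (∀ j : {j : Fin k // j.val < ℓ}, γ j)
      → ((∀ j : {j : Fin k // j ≠ ℓ}, α j) × ∀ j : {j : Fin k // j.val < ℓ}, γ j) × α ℓ :=
    fun p => ((fun j => p.1 j, p.2), p.1 ℓ)
  have hsplit : split.Injective := by
    rintro ⟨x, z⟩ ⟨x', z'⟩ h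
    simp only [split, Prod.mk.injEq] at h
    obtain ⟨⟨hrest, rfl⟩, hℓ⟩ := h
    refine Prod.ext (funext fun j => ?_) rfl
    by_cases hj : j = ℓ
    · subst hj
      exact hℓ
    · exact congrFun hrest ⟨j, hj⟩
  calc condEnt f (Z ℓ) (fun ω => ((fun j => X j ω), prefixVar Z ℓ ω))
      = condEnt f (Z ℓ) (fun ω => split ((fun j => X j ω), prefixVar Z ℓ ω)) :=
        (condEnt_comp_right_of_injective f _ _ hsplit).symm
    _ = condEnt f (Z ℓ) (X ℓ) := condEnt_pair_eq_of_condIndep f hf0 (h.comp_mid f restrict)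

/-- If each `Zℓ` is conditionally independent of `(X_j, Z_j)_{j≠ℓ}` given `Xℓ`, then
`H(Z₁,…,Z_k) - ∑ℓ H(Zℓ|Xℓ) = I(X₁,…,X_k; Z₁,…,Z_k)` and
`∑ℓ I(Xℓ;Zℓ) = I(X₁,…,X_k; Z₁,…,Z_k) + ∑ℓ I(Zℓ; Z₁,…,Z_{ℓ-1})`. -/
theorem upper_bound_identities {Ω : Type*} [Fintype Ω] {k : ℕ} {α γ : Fin k → Type*}
    [∀ ℓ, Fintype (α ℓ)] [∀ ℓ, Fintype (γ ℓ)]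
    (f : Ω → ℝ) (hf0 : ∀ ω, 0 ≤ f ω) (hf1 : ∑ ω, f ω = 1)
    (X : ∀ ℓ, Ω → α ℓ) (Z : ∀ ℓ, Ω → γ ℓ)
    (hci : ∀ (ℓ : Fin k) (a : α ℓ) (c : γ ℓ) (w : ∀ j : {j : Fin k // j ≠ ℓ}, α j.1 × γ j.1),
      pr f (fun ω => (Z ℓ ω, (fun j : {j : Fin k // j ≠ ℓ} => (X j.1 ω, Z j.1 ω)), X ℓ ω))
          (c, w, a) * pr f (X ℓ) a
        = pr f (fun ω => (Z ℓ ω, X ℓ ω)) (c, a)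
          * pr f (fun ω => ((fun j : {j : Fin k // j ≠ ℓ} => (X j.1 ω, Z j.1 ω)), X ℓ ω)) (w, a)) :
    (ent f (fun ω ℓ => Z ℓ ω) - ∑ ℓ, condEnt f (Z ℓ) (X ℓ)
        = mi f (fun ω ℓ => X ℓ ω) (fun ω ℓ => Z ℓ ω)) ∧
      (∑ ℓ, mi f (X ℓ) (Z ℓ)
        = mi f (fun ω ℓ => X ℓ ω) (fun ω ℓ => Z ℓ ω)
          + ∑ ℓ, mi f (Z ℓ) (fun ω => fun j : {j : Fin k // j < ℓ} => Z j.1 ω)) := by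
  have hXZ : ent f (fun ω => ((fun ℓ => X ℓ ω), fun ℓ => Z ℓ ω))
      = ent f (fun ω ℓ => X ℓ ω) + ∑ ℓ, condEnt f (Z ℓ) (X ℓ) := by
    rw [ent_pair_eq_add_sum_condEnt]
    congr 1
    exact sum_congr rfl fun ℓ _ =>
      condEnt_pair_prefixVar_eq_of_condIndep f hf0 X Z ℓ fun c w a => hci ℓ a c w
  have hfirst : ent f (fun ω ℓ => Z ℓ ω) - ∑ ℓ, condEnt f (Z ℓ) (X ℓ)
      = mi f (fun ω ℓ => X ℓ ω) (fun ω ℓ => Z ℓ ω) := by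
    simp only [mi]
    linarith
  have hmiXZ : ∑ ℓ, mi f (X ℓ) (Z ℓ) = ∑ ℓ, ent f (Z ℓ) - ∑ ℓ, condEnt f (Z ℓ) (X ℓ) := by
    simp only [mi_comm f (X _), mi_eq_ent_sub_condEnt, sum_sub_distrib]
  have hmiZ : ∑ ℓ, mi f (Z ℓ) (fun ω => fun j : {j : Fin k // j < ℓ} => Z j.1 ω)
      = ∑ ℓ, ent f (Z ℓ) - ent f (fun ω ℓ => Z ℓ ω) := by
    rw [ent_eq_sum_condEnt f hf1 Z, ← sum_sub_distrib]
    exact sum_congr rfl fun ℓ _ => mi_eq_ent_sub_condEnt f _ _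
  exact ⟨hfirst, by linarith⟩
end
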